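/- Let d ∈ {2,3} and k ≥ 2. The dimension of the local Trefftz space {(v,q) : v a vector field with components in 𝒫^k(ℝ^d), q ∈ 𝒫^{k-1}(ℝ^d), Δv = ∇q and div v = 0} equals the dimension of the space of vector-valued harmonic polynomials of degree at most k, {w : w a vector field with components in 𝒫^k(ℝ^d), Δw = 0}. -/

import Mathlib

open MvPolynomial

/-- The formal Laplacian `Δp = ∑ⱼ ∂ⱼ∂ⱼp` of a polynomial in `d` variables. -/
noncomputable def lap {d : ℕ} (p : MvPolynomial (Fin d) ℝ) : MvPolynomial (Fin d) ℝ :=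
  ∑ j, pderiv j (pderiv j p)

/-- The formal divergence `div v = ∑ᵢ ∂ᵢvᵢ` of a polynomial vector field. -/
noncomputable def pdiv {d : ℕ} (v : Fin d → MvPolynomial (Fin d) ℝ) : MvPolynomial (Fin d) ℝ :=
  ∑ i, pderiv i (v i)

/-- The local Trefftz space: pairs `(v, q)` with `v` a vector field with components of total
degree at most `k`, `q` of total degree at most `k - 1`, satisfying `Δv = ∇q` and `div v = 0`. -/
noncomputable def trefftzSpace (d k : ℕ) :
    Submodule ℝ ((Fin d → MvPolynomial (Fin d) ℝ) × MvPolynomial (Fin d) ℝ) where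
  carrier := {vq | (∀ i, (vq.1 i).totalDegree ≤ k) ∧ vq.2.totalDegree ≤ k - 1 ∧
      (∀ i, lap (vq.1 i) = pderiv i vq.2) ∧ pdiv vq.1 = 0}
  add_mem' := by
    rintro ⟨v, q⟩ ⟨w, r⟩ ⟨hv, hq, hvq, hdv⟩ ⟨hw, hr, hwr, hdw⟩
    refine ⟨fun i => le_trans (totalDegree_add _ _) (max_le (hv i) (hw i)),
      le_trans (totalDegree_add _ _) (max_le hq hr), fun i => ?_, ?_⟩
    · show lap (v i + w i) = pderiv i (q + r)
      simp [lap, Finset.sum_add_distrib, ← hvq i, ← hwr i]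
    · show pdiv (v + w) = 0
      rw [show pdiv (v + w) = pdiv v + pdiv w by simp [pdiv, Finset.sum_add_distrib],
        hdv, hdw, add_zero]
  zero_mem' :=
    ⟨fun i => by simp, by simp, fun i => by simp [lap], by simp [pdiv]⟩
  smul_mem' := by
    rintro c ⟨v, q⟩ ⟨hv, hq, hvq, hdv⟩
    refine ⟨fun i => le_trans (totalDegree_smul_le _ _) (hv i),
      le_trans (totalDegree_smul_le _ _) hq, fun i => ?_, ?_⟩
    · show lap (c • v i) = pderiv i (c • q)
      simp [lap, Finset.smul_sum, ← hvq i]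
    · show pdiv (c • v) = 0
      rw [show pdiv (c • v) = c • pdiv v by simp [pdiv, Finset.smul_sum], hdv, smul_zero]

/-- The space of vector fields with polynomial components of total degree at most `k`
that are (componentwise) harmonic. -/
noncomputable def harmonicSpace (d k : ℕ) :
    Submodule ℝ (Fin d → MvPolynomial (Fin d) ℝ) where
  carrier := {w | (∀ i, (w i).totalDegree ≤ k) ∧ ∀ i, lap (w i) = 0}
  add_mem' := by
    rintro v w ⟨hv, hlv⟩ ⟨hw, hlw⟩
    refine ⟨fun i => le_trans (totalDegree_add _ _) (max_le (hv i) (hw i)), fun i => ?_⟩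
    show lap (v i + w i) = 0
    rw [show lap (v i + w i) = lap (v i) + lap (w i) by simp [lap, Finset.sum_add_distrib],
      hlv i, hlw i, add_zero]
  zero_mem' := ⟨fun i => by simp, fun i => by simp [lap]⟩
  smul_mem' := by
    rintro c v ⟨hv, hlv⟩
    refine ⟨fun i => le_trans (totalDegree_smul_le _ _) (hv i), fun i => ?_⟩
    show lap (c • v i) = 0
    rw [show lap (c • v i) = c • lap (v i) by simp [lap, Finset.smul_sum], hlv i, smul_zero]

/-!
For a Trefftz pair `(v, q)`, taking the divergence of `Δv = ∇q` and using `div v = 0` gives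
`Δq = 0`; since `Δ(xᵢ q) = xᵢ Δq + 2 ∂ᵢq`, the field `v - x q / 2` is then harmonic. This map
is bijective because `q ↦ div (x q)` multiplies the coefficient of `x^t` by `d + |t|`, which is
invertible for `d > 0`: `q` is recovered from `div (v - x q / 2) = -div (x q) / 2`, and for a
harmonic `w` the pressure `q` solving `div (x q) = -2 div w` is again harmonic, because
`Δ div (x q) = div (x Δq) + 2 Δq` multiplies the coefficients of `Δq` by `d + |t| + 2`.
-/

namespace MvPolynomial

variable {σ R : Type*}

theorem pderiv_pderiv_comm [CommRing R] (i j : σ) (p : MvPolynomial σ R) :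
    pderiv i (pderiv j p) = pderiv j (pderiv i p) := by
  classical
  have hcomm : ⁅pderiv i, pderiv j⁆ = (0 : Derivation R (MvPolynomial σ R) (MvPolynomial σ R)) :=
    derivation_ext fun l => by
      rw [Derivation.commutator_apply, pderiv_X, pderiv_X]
      simp [Pi.single_apply, apply_ite]
  have := congr($hcomm p)
  rwa [Derivation.commutator_apply, Derivation.zero_apply, sub_eq_zero] at this

theorem totalDegree_pderiv_le [CommSemiring R] (i : σ) (p : MvPolynomial σ R) :
    (pderiv i p).totalDegree ≤ p.totalDegree - 1 := by
  refine Finset.sup_le fun m hm => ?_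
  rw [mem_support_iff, coeff_pderiv] at hm
  have h := le_totalDegree (mem_support_iff.2 (left_ne_zero_of_mul hm))
  change (m + Finsupp.single i 1).degree ≤ _ at h
  rw [map_add, Finsupp.degree_single] at h
  change m.degree ≤ _
  omega

theorem totalDegree_X_mul_le [CommSemiring R] {k : ℕ} (i : σ) {q : MvPolynomial σ R}
    (hk : 1 ≤ k) (hq : q.totalDegree ≤ k - 1) : (X i * q).totalDegree ≤ k :=
  have hX : (X i : MvPolynomial σ R).totalDegree ≤ 1 :=
    (totalDegree_monomial_le (Finsupp.single i 1) 1).trans (by simp)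
  (totalDegree_mul _ _).trans (by omega)

noncomputable def scaleCoeffs [CommSemiring R] (c : (σ →₀ ℕ) → R) (p : MvPolynomial σ R) :
    MvPolynomial σ R :=
  ∑ s ∈ p.support, monomial s (c s * coeff s p)

theorem coeff_scaleCoeffs [CommSemiring R] (c : (σ →₀ ℕ) → R) (p : MvPolynomial σ R)
    (t : σ →₀ ℕ) : coeff t (scaleCoeffs c p) = c t * coeff t p := by
  classical
  simp only [scaleCoeffs, coeff_sum, coeff_monomial, Finset.sum_ite_eq', mem_support_iff]
  split_ifs with h
  · rfl
  · rw [not_not.1 h, mul_zero]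

theorem totalDegree_scaleCoeffs_le [CommSemiring R] (c : (σ →₀ ℕ) → R) (p : MvPolynomial σ R) :
    (scaleCoeffs c p).totalDegree ≤ p.totalDegree :=
  totalDegree_le_of_support_subset fun t ht => by
    rw [mem_support_iff, coeff_scaleCoeffs] at ht
    exact mem_support_iff.2 (right_ne_zero_of_mul ht)

end MvPolynomial

section Laplacian

variable {d : ℕ}

theorem lap_add (p q : MvPolynomial (Fin d) ℝ) : lap (p + q) = lap p + lap q := by
  simp only [lap, map_add, Finset.sum_add_distrib]

theorem lap_sub (p q : MvPolynomial (Fin d) ℝ) : lap (p - q) = lap p - lap q := by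
  simp only [lap, map_sub, Finset.sum_sub_distrib]

theorem lap_smul (c : ℝ) (p : MvPolynomial (Fin d) ℝ) : lap (c • p) = c • lap p := by
  simp only [lap, Derivation.map_smul, Finset.smul_sum]

theorem lap_zero : lap (0 : MvPolynomial (Fin d) ℝ) = 0 := by
  simp only [lap, map_zero, Finset.sum_const_zero]

theorem pdiv_add (v w : Fin d → MvPolynomial (Fin d) ℝ) : pdiv (v + w) = pdiv v + pdiv w := by
  simp only [pdiv, Pi.add_apply, map_add, Finset.sum_add_distrib]

theorem pdiv_smul (c : ℝ) (v : Fin d → MvPolynomial (Fin d) ℝ) : pdiv (c • v) = c • pdiv v := by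
  simp only [pdiv, Pi.smul_apply, Derivation.map_smul, Finset.smul_sum]

theorem pdiv_pderiv (q : MvPolynomial (Fin d) ℝ) : pdiv (fun i => pderiv i q) = lap q := rfl

theorem totalDegree_pdiv_le {k : ℕ} {v : Fin d → MvPolynomial (Fin d) ℝ}
    (hv : ∀ i, (v i).totalDegree ≤ k) : (pdiv v).totalDegree ≤ k - 1 :=
  (totalDegree_finsetSum _ _).trans <| Finset.sup_le fun i _ =>
    (totalDegree_pderiv_le i (v i)).trans (Nat.sub_le_sub_right (hv i) 1)

theorem lap_pdiv (v : Fin d → MvPolynomial (Fin d) ℝ) :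
    lap (pdiv v) = pdiv (fun i => lap (v i)) := by
  simp only [lap, pdiv, map_sum]
  rw [Finset.sum_comm]
  refine Finset.sum_congr rfl fun i _ => Finset.sum_congr rfl fun j _ => ?_
  rw [pderiv_pderiv_comm j i, pderiv_pderiv_comm j i]

theorem lap_X_mul (i : Fin d) (q : MvPolynomial (Fin d) ℝ) :
    lap (X i * q) = X i * lap q + (2 : ℝ) • pderiv i q := by
  classical
  have hj (j : Fin d) : pderiv j (pderiv j (X i * q)) =
      X i * pderiv j (pderiv j q) + if j = i then (2 : ℝ) • pderiv i q else 0 := by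
    rcases eq_or_ne j i with rfl | hji
    · simp only [pderiv_mul, pderiv_X_self, map_add, pderiv_one, if_true]
      rw [two_smul]
      ring
    · simp [pderiv_X_of_ne hji.symm, hji]
  simp only [lap, hj, Finset.sum_add_distrib, Finset.mul_sum, Finset.sum_ite_eq', Finset.mem_univ,
    if_true]

theorem coeff_pdiv_X_mul (t : Fin d →₀ ℕ) (q : MvPolynomial (Fin d) ℝ) :
    coeff t (pdiv fun i => X i * q) = ((d : ℝ) + t.degree) * coeff t q := by
  have hi (i : Fin d) : coeff t (pderiv i (X i * q)) = coeff t q * ((t i : ℝ) + 1) := by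
    rw [coeff_pderiv, add_comm t, coeff_X_mul]
  simp only [pdiv, coeff_sum, hi, ← Finset.mul_sum, Finset.sum_add_distrib, Finsupp.degree_eq_sum,
    Nat.cast_sum, Finset.sum_const, Finset.card_univ, Fintype.card_fin, nsmul_eq_mul, mul_one]
  ring

end Laplacian

section DivXMul

variable {d : ℕ}

theorem lap_pdiv_X_mul (q : MvPolynomial (Fin d) ℝ) :
    lap (pdiv fun i => X i * q) = pdiv (fun i => X i * lap q) + (2 : ℝ) • lap q := by
  have h : (fun i => lap (X i * q)) = (fun i => X i * lap q) + (2 : ℝ) • fun i => pderiv i q :=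
    funext fun i => lap_X_mul i q
  rw [lap_pdiv, h, pdiv_add, pdiv_smul, pdiv_pderiv]

theorem lap_eq_zero_of_lap_pdiv_X_mul_eq_zero {q : MvPolynomial (Fin d) ℝ}
    (h : lap (pdiv fun i => X i * q) = 0) : lap q = 0 := by
  ext t
  have ht := congr(coeff t $h)
  rw [lap_pdiv_X_mul, coeff_add, coeff_smul, coeff_pdiv_X_mul, coeff_zero, smul_eq_mul,
    ← add_mul] at ht
  exact (mul_eq_zero.1 ht).resolve_left (by positivity)

theorem eq_zero_of_pdiv_X_mul_eq_zero (hd : 0 < d) {q : MvPolynomial (Fin d) ℝ}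
    (h : (pdiv fun i => X i * q) = 0) : q = 0 := by
  ext t
  have ht := congr(coeff t $h)
  rw [coeff_pdiv_X_mul, coeff_zero] at ht
  exact (mul_eq_zero.1 ht).resolve_left (by positivity)

theorem pdiv_X_mul_scaleCoeffs (hd : 0 < d) (p : MvPolynomial (Fin d) ℝ) :
    (pdiv fun i => X i * scaleCoeffs (fun t => ((d : ℝ) + t.degree)⁻¹) p) = p := by
  ext t
  rw [coeff_pdiv_X_mul, coeff_scaleCoeffs, mul_inv_cancel_left₀ (by positivity)]

theorem lap_inv_two_smul_X_mul {q : MvPolynomial (Fin d) ℝ} (hq : lap q = 0) (i : Fin d) :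
    lap ((2⁻¹ : ℝ) • (X i * q)) = pderiv i q := by
  rw [lap_smul, lap_X_mul, hq, mul_zero, zero_add, smul_smul, inv_mul_cancel₀ two_ne_zero,
    one_smul]

end DivXMul

section Trefftz

variable {d k : ℕ}

theorem lap_eq_zero_of_mem_trefftzSpace {v : Fin d → MvPolynomial (Fin d) ℝ}
    {q : MvPolynomial (Fin d) ℝ} (h : (v, q) ∈ trefftzSpace d k) : lap q = 0 :=
  calc lap q = pdiv fun i => pderiv i q := (pdiv_pderiv q).symm
    _ = pdiv fun i => lap (v i) := by simp only [h.2.2.1]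
    _ = lap (pdiv v) := (lap_pdiv v).symm
    _ = 0 := by rw [h.2.2.2, lap_zero]

noncomputable def subHalfXMul (d : ℕ) :
    (Fin d → MvPolynomial (Fin d) ℝ) × MvPolynomial (Fin d) ℝ →ₗ[ℝ]
      (Fin d → MvPolynomial (Fin d) ℝ) where
  toFun vq i := vq.1 i - (2⁻¹ : ℝ) • (X i * vq.2)
  map_add' _ _ := by
    ext1 i
    simp only [Prod.fst_add, Prod.snd_add, Pi.add_apply, mul_add, smul_add]
    abel
  map_smul' _ _ := by
    ext1 i
    simp only [Prod.smul_fst, Prod.smul_snd, Pi.smul_apply, RingHom.id_apply, mul_smul_comm,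
      smul_sub, smul_comm (2⁻¹ : ℝ)]

theorem subHalfXMul_apply (v : Fin d → MvPolynomial (Fin d) ℝ) (q : MvPolynomial (Fin d) ℝ)
    (i : Fin d) : subHalfXMul d (v, q) i = v i - (2⁻¹ : ℝ) • (X i * q) := rfl

theorem subHalfXMul_mem_harmonicSpace (hk : 1 ≤ k)
    {vq : (Fin d → MvPolynomial (Fin d) ℝ) × MvPolynomial (Fin d) ℝ} (h : vq ∈ trefftzSpace d k) :
    subHalfXMul d vq ∈ harmonicSpace d k := by
  obtain ⟨v, q⟩ := vq
  have hq := lap_eq_zero_of_mem_trefftzSpace h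
  obtain ⟨hv, hqdeg, hvq, -⟩ := h
  refine ⟨fun i => ?_, fun i => ?_⟩
  · rw [subHalfXMul_apply]
    exact (totalDegree_sub _ _).trans
      (max_le (hv i) ((totalDegree_smul_le _ _).trans (totalDegree_X_mul_le i hk hqdeg)))
  · rw [subHalfXMul_apply, lap_sub, lap_inv_two_smul_X_mul hq, hvq, sub_self]

noncomputable def trefftzToHarmonic (d k : ℕ) (hk : 1 ≤ k) :
    trefftzSpace d k →ₗ[ℝ] harmonicSpace d k :=
  (subHalfXMul d).restrict fun _ => subHalfXMul_mem_harmonicSpace hk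

theorem coe_trefftzToHarmonic_apply (hk : 1 ≤ k) (x : trefftzSpace d k) :
    (trefftzToHarmonic d k hk x : Fin d → MvPolynomial (Fin d) ℝ) = subHalfXMul d x := rfl

theorem trefftzToHarmonic_injective (hd : 0 < d) (hk : 1 ≤ k) :
    Function.Injective (trefftzToHarmonic d k hk) := by
  rw [← LinearMap.ker_eq_bot, LinearMap.ker_eq_bot']
  rintro ⟨⟨v, q⟩, hmem⟩ h0
  have hv : v = (2⁻¹ : ℝ) • fun i => X i * q := by
    ext1 i
    have hi := congr_fun (congrArg Subtype.val h0) i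
    rw [coe_trefftzToHarmonic_apply, subHalfXMul_apply] at hi
    exact sub_eq_zero.1 hi
  have hq : q = 0 := by
    refine eq_zero_of_pdiv_X_mul_eq_zero hd ?_
    have hdiv := hmem.2.2.2
    rw [hv, pdiv_smul] at hdiv
    exact (smul_eq_zero.1 hdiv).resolve_left (by norm_num)
  have hv0 : v = 0 := funext fun i => by simp [hv, hq]
  subst hq hv0
  rfl

theorem trefftzToHarmonic_surjective (hd : 0 < d) (hk : 1 ≤ k) :
    Function.Surjective (trefftzToHarmonic d k hk) := by
  rintro ⟨w, hw, hlw⟩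
  set q := scaleCoeffs (fun t => ((d : ℝ) + t.degree)⁻¹) ((-2 : ℝ) • pdiv w)
  have hdivq : (pdiv fun i => X i * q) = (-2 : ℝ) • pdiv w := pdiv_X_mul_scaleCoeffs hd _
  have hlq : lap q = 0 := lap_eq_zero_of_lap_pdiv_X_mul_eq_zero <| by
    rw [hdivq, lap_smul, lap_pdiv]
    simp [hlw, pdiv]
  have hqdeg : q.totalDegree ≤ k - 1 := (totalDegree_scaleCoeffs_le _ _).trans <|
    (totalDegree_smul_le _ _).trans (totalDegree_pdiv_le hw)
  have hmem : (w + (2⁻¹ : ℝ) • (fun i => X i * q), q) ∈ trefftzSpace d k := by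
    refine ⟨fun i => ?_, hqdeg, fun i => ?_, ?_⟩
    · exact (totalDegree_add _ _).trans
        (max_le (hw i) ((totalDegree_smul_le _ _).trans (totalDegree_X_mul_le i hk hqdeg)))
    · dsimp only
      rw [Pi.add_apply, Pi.smul_apply, lap_add, hlw, zero_add, lap_inv_two_smul_X_mul hlq]
    · rw [pdiv_add, pdiv_smul, hdivq, smul_smul]
      norm_num
  exact ⟨⟨_, hmem⟩, Subtype.ext <| funext fun i => add_sub_cancel_right (w i) _⟩

end Trefftz

/-- For `d ∈ {2, 3}` and `k ≥ 2`, the dimension of the local Trefftz space equals the dimension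
of the space of vector-valued harmonic polynomials of degree at most `k`. -/
theorem finrank_trefftzSpace_eq_finrank_harmonic (d k : ℕ) (hd : d = 2 ∨ d = 3) (hk : 2 ≤ k) :
    Module.finrank ℝ (trefftzSpace d k) = Module.finrank ℝ (harmonicSpace d k) := by
  have hd0 : 0 < d := by omega
  have hk1 : 1 ≤ k := by omega
  exact (LinearEquiv.ofBijective (trefftzToHarmonic d k hk1)
    ⟨trefftzToHarmonic_injective hd0 hk1, trefftzToHarmonic_surjective hd0 hk1⟩).finrank_eq
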